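/- In the Markovian user model, let (x_1, …, x_k) be an optimal assignment (one maximizing efficiency over all injective sequences of length k). If bidder j does not appear in the assignment and there is an assigned bidder x_t with a_j ≥ a_{x_t} and e_j ≥ e_{x_t}, then the assignment obtained by substituting j for x_t has efficiency at least that of (x_1, …, x_k); in particular it is also optimal. -/

import Mathlib

/-!
Write `V` for the efficiency of a list of bidders and the assignment as `A ++ x t :: B`.
Efficiency splits along concatenation as `V (A ++ L) = V A + (∏_{i ∈ A} q i) * V L`, so for a
prefix of positive weight both optimality and the substitution only concern the suffix (for
weight zero there is nothing to prove). Optimality against moving `x t` behind `B` gives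
`(1 - q (x t)) * V B ≤ e (x t)`, i.e. `V B ≤ a (x t) ≤ a jb`, and this together with
`e (x t) ≤ e jb` yields `e (x t) + q (x t) * V B ≤ e jb + q jb * V B`.
-/

/-- Efficiency of an assignment `x` of bidders to `k` positions in the
Markovian user model: `Σ_j e (x j) · Π_{l < j} q (x l)`. -/
noncomputable def eff (n : ℕ) (e q : Fin n → ℝ) (k : ℕ) (x : Fin k → Fin n) : ℝ :=
  ∑ j : Fin k, e (x j) * ∏ l ∈ Finset.univ.filter (fun l => l < j), q (x l)

lemma List.ofFn_update {α : Type*} [DecidableEq α] {k : ℕ} (x : Fin k → α) (t : Fin k) (a : α) :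
    List.ofFn (Function.update x t a) = (List.ofFn x).set t a :=
  List.ext_getElem (by simp) fun i _ _ => by
    simp [List.getElem_set, Function.update_apply, Fin.ext_iff, eq_comm]

lemma List.exists_injective_ofFn_eq {α : Type*} {k : ℕ} {Z : List α} (hZ : Z.Nodup)
    (hlen : Z.length = k) : ∃ z : Fin k → α, Function.Injective z ∧ List.ofFn z = Z := by
  subst hlen
  exact ⟨Z.get, List.nodup_iff_injective_get.mp hZ, List.ofFn_get Z⟩

lemma add_mul_le_add_mul_of_div_le {et qt ej qj S : ℝ} (hS : 0 ≤ S) (hSt : (1 - qt) * S ≤ et)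
    (hqt : qt < 1) (hqj : qj < 1) (he : et ≤ ej) (ha : et / (1 - qt) ≤ ej / (1 - qj)) :
    et + qt * S ≤ ej + qj * S := by
  rcases le_total qt qj with hq | hq
  · nlinarith
  · rw [div_le_div_iff₀ (by linarith) (by linarith)] at ha
    -- `S ≤ et / (1 - qt) ≤ ej / (1 - qj)`, and then
    -- `(1 - qj) * (ej + qj * S - et - qt * S) ≥ (qt - qj) * (ej - (1 - qj) * S) ≥ 0`.
    have hSj : (1 - qj) * S ≤ ej := by nlinarith
    nlinarith [mul_le_mul_of_nonneg_left hSj (sub_nonneg.2 hq)]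

section
variable {α : Type*} (e q : α → ℝ)

noncomputable def listEff : List α → ℝ
  | [] => 0
  | i :: L => e i + q i * listEff L

@[simp] lemma listEff_nil : listEff e q [] = 0 := rfl

@[simp] lemma listEff_cons (i : α) (L : List α) :
    listEff e q (i :: L) = e i + q i * listEff e q L := rfl

lemma listEff_append (A B : List α) :
    listEff e q (A ++ B) = listEff e q A + (A.map q).prod * listEff e q B := by
  induction A with
  | nil => simp
  | cons i A ih =>
    simp only [List.cons_append, listEff_cons, ih, List.map_cons, List.prod_cons]
    ring

variable {e q}

lemma listEff_nonneg (he : ∀ i, 0 ≤ e i) (hq : ∀ i, 0 ≤ q i) (L : List α) :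
    0 ≤ listEff e q L := by
  induction L with
  | nil => rfl
  | cons i L ih => exact add_nonneg (he i) (mul_nonneg (hq i) ih)

lemma prod_map_nonneg (hq : ∀ i, 0 ≤ q i) (L : List α) : 0 ≤ (L.map q).prod :=
  List.prod_nonneg (by simpa using fun i _ => hq i)

lemma listEff_append_le_append {A L L' : List α} (hA : 0 ≤ (A.map q).prod)
    (h : listEff e q L ≤ listEff e q L') : listEff e q (A ++ L) ≤ listEff e q (A ++ L') := by
  rw [listEff_append, listEff_append]
  gcongr

lemma listEff_append_le_append_iff {A L L' : List α} (hA : 0 < (A.map q).prod) :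
    listEff e q (A ++ L) ≤ listEff e q (A ++ L') ↔ listEff e q L ≤ listEff e q L' := by
  rw [listEff_append, listEff_append, add_le_add_iff_left, mul_le_mul_iff_right₀ hA]

lemma one_sub_mul_listEff_le_of_move_last_le {B : List α} {i : α} (hei : 0 ≤ e i)
    (hq : ∀ i, 0 ≤ q i) (h : listEff e q (B ++ [i]) ≤ listEff e q (i :: B)) :
    (1 - q i) * listEff e q B ≤ e i := by
  rw [listEff_append, listEff_cons, listEff_cons, listEff_nil] at h
  nlinarith [mul_nonneg (prod_map_nonneg hq B) hei]

lemma listEff_append_cons_le_append_cons (A B : List α) {i j : α} (he : ∀ i, 0 ≤ e i)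
    (hq : ∀ i, 0 ≤ q i) (hqi : q i < 1) (hqj : q j < 1)
    (hmove : listEff e q (A ++ (B ++ [i])) ≤ listEff e q (A ++ i :: B))
    (ha : e i / (1 - q i) ≤ e j / (1 - q j)) (hij : e i ≤ e j) :
    listEff e q (A ++ i :: B) ≤ listEff e q (A ++ j :: B) := by
  rcases (prod_map_nonneg hq A).eq_or_lt with hA | hA
  · simp [listEff_append, ← hA]
  · refine listEff_append_le_append hA.le ?_
    have hB := one_sub_mul_listEff_le_of_move_last_le (he i) hq
      ((listEff_append_le_append_iff hA).mp hmove)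
    simpa using add_mul_le_add_mul_of_div_le (listEff_nonneg he hq B) hB hqi hqj hij ha

end

lemma eff_succ (n : ℕ) (e q : Fin n → ℝ) (k : ℕ) (x : Fin (k + 1) → Fin n) :
    eff n e q (k + 1) x = e (x 0) + q (x 0) * eff n e q k (fun i => x i.succ) := by
  rw [eff, eff, Fin.sum_univ_succ, Finset.mul_sum]
  congr 1
  · simp
  · refine Finset.sum_congr rfl fun j _ => ?_
    rw [Finset.prod_filter, Finset.prod_filter, Fin.prod_univ_succ]
    simp [Fin.succ_lt_succ_iff]
    ring

lemma eff_eq_listEff (n : ℕ) (e q : Fin n → ℝ) (k : ℕ) (x : Fin k → Fin n) :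
    eff n e q k x = listEff e q (List.ofFn x) := by
  induction k with
  | zero => simp [eff]
  | succ k ih => rw [eff_succ, ih, List.ofFn_succ, listEff_cons]

theorem substitute_higher_ecpm_bidder_general (n k : ℕ)
    (e q : Fin n → ℝ) (he : ∀ i, 0 ≤ e i)
    (hq0 : ∀ i, 0 ≤ q i) (hq1 : ∀ i, q i < 1)
    (x : Fin k → Fin n) (hx : Function.Injective x)
    (hopt : ∀ z : Fin k → Fin n, Function.Injective z →
      eff n e q k z ≤ eff n e q k x)
    (jb : Fin n) (t : Fin k)
    (ha : e (x t) / (1 - q (x t)) ≤ e jb / (1 - q jb))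
    (he' : e (x t) ≤ e jb) :
    eff n e q k x ≤ eff n e q k (Function.update x t jb) ∧
    ∀ z : Fin k → Fin n, Function.Injective z →
      eff n e q k z ≤ eff n e q k (Function.update x t jb) := by
  set A := (List.ofFn x).take t
  set B := (List.ofFn x).drop (t + 1)
  have hsplit (b : Fin n) : List.ofFn (Function.update x t b) = A ++ b :: B := by
    rw [List.ofFn_update, List.set_eq_take_append_cons_drop, if_pos (by simp)]
  have hx_split : List.ofFn x = A ++ x t :: B := by simpa using hsplit (x t)
  have hperm : (A ++ (B ++ [x t])).Perm (List.ofFn x) :=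
    hx_split ▸ (List.perm_append_singleton (x t) B).append_left A
  obtain ⟨z, hz, hzAB⟩ := List.exists_injective_ofFn_eq
    (hperm.nodup_iff.mpr (List.nodup_ofFn.mpr hx)) (by simpa using hperm.length_eq)
  have hmain : eff n e q k x ≤ eff n e q k (Function.update x t jb) := by
    have hmove := hopt z hz
    rw [eff_eq_listEff, eff_eq_listEff, hzAB, hx_split] at hmove
    rw [eff_eq_listEff, eff_eq_listEff, hx_split, hsplit]
    exact listEff_append_cons_le_append_cons A B he hq0 (hq1 _) (hq1 _) hmove ha he'
  exact ⟨hmain, fun z hz => (hopt z hz).trans hmain⟩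

/-- Substitution into an optimal assignment: if `x` is an optimal assignment,
bidder `jb` is unassigned, and `jb` has adjusted ecpm and ecpm at least those
of the assigned bidder `x t`, then substituting `jb` for `x t` gives an
assignment that is no worse — in particular, it is also optimal. -/
theorem substitute_higher_ecpm_bidder (n k : ℕ) (hk : k ≤ n)
    (e q : Fin n → ℝ) (he : ∀ i, 0 ≤ e i)
    (hq0 : ∀ i, 0 ≤ q i) (hq1 : ∀ i, q i < 1)
    (x : Fin k → Fin n) (hx : Function.Injective x)
    (hopt : ∀ z : Fin k → Fin n, Function.Injective z →
      eff n e q k z ≤ eff n e q k x)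
    (jb : Fin n) (hjb : jb ∉ Set.range x) (t : Fin k)
    (ha : e (x t) / (1 - q (x t)) ≤ e jb / (1 - q jb))
    (he' : e (x t) ≤ e jb) :
    eff n e q k x ≤ eff n e q k (Function.update x t jb) ∧
    ∀ z : Fin k → Fin n, Function.Injective z →
      eff n e q k z ≤ eff n e q k (Function.update x t jb) :=
  substitute_higher_ecpm_bidder_general n k e q he hq0 hq1 x hx hopt jb t ha he'
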